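/- arXiv:0710.4102 — 2 statements merged into one kernel-verified Lean document; each statement's English description precedes it below -/
import Mathlib

section
/- One-dimensional weighted Hardy inequality: for α ≥ 0 and a smooth function f on [0, r₁], ∫₀^{r₁} |f|²/(1+x)^{α+2} dx ≤ (4/(α+1)²) ∫₀^{r₁} |f'|²/(1+x)^{α} dx + (2/(α+1)) |f(0)|². -/
/-!
Integrating the derivative of `f² / (1 + x) ^ (α + 1)` over `[0, r₁]` gives
`(α + 1) ∫ f² / (1 + x) ^ (α + 2)`
`  = ∫ 2 f f' / (1 + x) ^ (α + 1) + f(0)² - f(r₁)² / (1 + r₁) ^ (α + 1)`.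
The last term is nonpositive, and AM-GM bounds the cross term pointwise by
`(α + 1) / 2 · f² / (1 + x) ^ (α + 2) + 2 / (α + 1) · f'² / (1 + x) ^ α`,
so half of the left-hand side is absorbed.
-/

open intervalIntegral

lemma two_mul_le_div_two_mul_sq_add (a b : ℝ) {c : ℝ} (hc : 0 < c) :
    2 * a * b ≤ c / 2 * a ^ 2 + 2 / c * b ^ 2 := by
  have hsq : c / 2 * a ^ 2 + 2 / c * b ^ 2 - 2 * a * b = (c * a - 2 * b) ^ 2 / (2 * c) := by
    field_simp
    ring
  have : 0 ≤ (c * a - 2 * b) ^ 2 / (2 * c) := by positivity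
  linarith

lemma two_mul_div_rpow_le {y : ℝ} (hy : 0 < y) (a b β : ℝ) {c : ℝ} (hc : 0 < c) :
    2 * a * b / y ^ (β + 1) ≤ c / 2 * (a ^ 2 / y ^ (β + 2)) + 2 / c * (b ^ 2 / y ^ β) := by
  have hβ : 0 < y ^ β := Real.rpow_pos_of_pos hy β
  rw [show β + 2 = β + 1 + 1 by ring, Real.rpow_add_one hy.ne' (β + 1),
    Real.rpow_add_one hy.ne' β]
  have key := two_mul_le_div_two_mul_sq_add a (b * y) hc
  calc 2 * a * b / (y ^ β * y) = 2 * a * (b * y) / (y ^ β * y * y) := by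
        field_simp
    _ ≤ (c / 2 * a ^ 2 + 2 / c * (b * y) ^ 2) / (y ^ β * y * y) := by gcongr
    _ = c / 2 * (a ^ 2 / (y ^ β * y * y)) + 2 / c * (b ^ 2 / y ^ β) := by
        field_simp

lemma hasDerivAt_sq_div_one_add_rpow {f : ℝ → ℝ} {f' x : ℝ} (hf : HasDerivAt f f' x)
    (hx : 0 < 1 + x) (β : ℝ) :
    HasDerivAt (fun y => f y ^ 2 / (1 + y) ^ (β + 1))
      (2 * f x * f' / (1 + x) ^ (β + 1) - (β + 1) * (f x ^ 2 / (1 + x) ^ (β + 2))) x := by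
  have hnum : HasDerivAt (fun y => f y ^ 2) (2 * f x * f') x := by
    simpa [mul_comm, mul_assoc] using hf.fun_pow 2
  have hden : HasDerivAt (fun y : ℝ => (1 + y) ^ (β + 1)) ((β + 1) * (1 + x) ^ β) x := by
    simpa using ((hasDerivAt_id x).const_add 1).rpow_const (p := β + 1) (Or.inl hx.ne')
  have hβ : 0 < (1 + x) ^ β := Real.rpow_pos_of_pos hx β
  refine (hnum.div hden (Real.rpow_pos_of_pos hx _).ne').congr_deriv ?_
  rw [show β + 2 = β + 1 + 1 by ring, Real.rpow_add_one hx.ne' (β + 1),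
    Real.rpow_add_one hx.ne' β]
  field_simp

lemma intervalIntegrable_div_one_add_rpow {g : ℝ → ℝ} (hg : Continuous g) {r : ℝ} (hr : 0 ≤ r)
    (β : ℝ) : IntervalIntegrable (fun x => g x / (1 + x) ^ β) MeasureTheory.volume 0 r := by
  have hpos : ∀ x ∈ Set.uIcc 0 r, 0 < 1 + x := fun x hx => by
    linarith [(Set.uIcc_of_le hr ▸ hx).1]
  refine (hg.continuousOn.div ?_ fun x hx => (Real.rpow_pos_of_pos (hpos x hx) β).ne')
    |>.intervalIntegrable
  exact (continuous_const_add 1).continuousOn.rpow_const fun x hx => Or.inl (hpos x hx).ne'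

lemma integral_sq_div_one_add_rpow_eq {f : ℝ → ℝ} (hf : ContDiff ℝ 1 f) {r : ℝ} (hr : 0 ≤ r)
    (β : ℝ) :
    (β + 1) * ∫ x in (0:ℝ)..r, f x ^ 2 / (1 + x) ^ (β + 2) =
      (∫ x in (0:ℝ)..r, 2 * f x * deriv f x / (1 + x) ^ (β + 1))
        + f 0 ^ 2 - f r ^ 2 / (1 + r) ^ (β + 1) := by
  have hderiv : ∀ x ∈ Set.uIcc 0 r, HasDerivAt (fun y => f y ^ 2 / (1 + y) ^ (β + 1))
      (2 * f x * deriv f x / (1 + x) ^ (β + 1) - (β + 1) * (f x ^ 2 / (1 + x) ^ (β + 2))) x :=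
    fun x hx => hasDerivAt_sq_div_one_add_rpow (hf.differentiable one_ne_zero x).hasDerivAt
      (by linarith [(Set.uIcc_of_le hr ▸ hx).1]) β
  have hf₀ := hf.continuous
  have hf₁ := hf.continuous_deriv le_rfl
  have hcross := intervalIntegrable_div_one_add_rpow
    (by fun_prop : Continuous fun x => 2 * f x * deriv f x) hr (β + 1)
  have hsq := (intervalIntegrable_div_one_add_rpow
    (by fun_prop : Continuous fun x => f x ^ 2) hr (β + 2)).const_mul (β + 1)
  have hftc := integral_eq_sub_of_hasDerivAt hderiv (hcross.sub hsq)
  rw [integral_sub hcross hsq, integral_const_mul] at hftc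
  norm_num at hftc
  linarith

/-- One-dimensional weighted Hardy inequality: for `α ≥ 0` and a continuously
differentiable function `f` on `[0, r₁]`,
`∫₀^{r₁} |f|²/(1+x)^{α+2} dx ≤ (4/(α+1)²) ∫₀^{r₁} |f'|²/(1+x)^{α} dx + (2/(α+1)) |f 0|²`. -/
theorem weighted_hardy_inequality (α r₁ : ℝ) (hα : 0 ≤ α) (hr₁ : 0 < r₁)
    (f : ℝ → ℝ) (hf : ContDiff ℝ 1 f) :
    (∫ x in (0:ℝ)..r₁, (f x) ^ 2 / (1 + x) ^ (α + 2)) ≤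
      (4 / (α + 1) ^ 2) * (∫ x in (0:ℝ)..r₁, (deriv f x) ^ 2 / (1 + x) ^ α)
        + (2 / (α + 1)) * (f 0) ^ 2 := by
  set c := α + 1
  have hc : 0 < c := by linarith
  set I := ∫ x in (0:ℝ)..r₁, f x ^ 2 / (1 + x) ^ (α + 2)
  set J := ∫ x in (0:ℝ)..r₁, deriv f x ^ 2 / (1 + x) ^ α
  have hf₀ := hf.continuous
  have hf₁ := hf.continuous_deriv le_rfl
  have hI := (intervalIntegrable_div_one_add_rpow
    (by fun_prop : Continuous fun x => f x ^ 2) hr₁.le (α + 2)).const_mul (c / 2)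
  have hJ := (intervalIntegrable_div_one_add_rpow
    (by fun_prop : Continuous fun x => deriv f x ^ 2) hr₁.le α).const_mul (2 / c)
  have hcross :
      ∫ x in (0:ℝ)..r₁, 2 * f x * deriv f x / (1 + x) ^ (α + 1) ≤ c / 2 * I + 2 / c * J := by
    rw [← integral_const_mul, ← integral_const_mul, ← integral_add hI hJ]
    refine integral_mono_on hr₁.le ?_ (hI.add hJ) fun x hx =>
      two_mul_div_rpow_le (by linarith [hx.1]) _ _ α hc
    exact intervalIntegrable_div_one_add_rpow
      (by fun_prop : Continuous fun x => 2 * f x * deriv f x) hr₁.le (α + 1)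
  have hboundary : 0 ≤ f r₁ ^ 2 / (1 + r₁) ^ (α + 1) := by
    have : 0 < 1 + r₁ := by linarith
    positivity
  have hhalf : c / 2 * I ≤ 2 / c * J + f 0 ^ 2 := by
    linarith [integral_sq_div_one_add_rpow_eq hf hr₁.le α]
  calc I = 2 / c * (c / 2 * I) := by field_simp
    _ ≤ 2 / c * (2 / c * J + f 0 ^ 2) := by gcongr
    _ = 4 / c ^ 2 * J + 2 / c * f 0 ^ 2 := by field_simp; ring
end

section
/- The potential V_L(r) = r^{-2}(1 − 2M/r), viewed as a function of the tortoise coordinate r*, satisfies: 2V_L + r* · dV_L/dr* ≤ 0 outside a compact set of r* values. Equivalently, t·(2V_L + r* V_L') is bounded above by t times a nonnegative compactly supported function. -/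
/-!
Along a solution of `dr/dr* = 1 − 2M/r` with `r(0) = 3M`, the function
`T(x) = x − 3M + 2M log((x − 2M)/M)` has derivative `1` in `r*`, so `r* = T(r)`.
The trapping term equals `2(1 − 2M/r) r⁻⁴ (r² − r*(r − 3M))`, and with `r* = T(r)` the bracket
is `M(6r − 9M − 2(r − 3M) log((r − 2M)/M))`. Since `T(r) ≤ 3(r − 3M)`, a large positive `r*`
forces `r` large and the logarithm above `4`; a large negative `r*` forces the logarithm
below `−9` and `r` close to `2M`. In both cases the bracket is nonpositive.
-/

open Real

noncomputable def tortoise (M x : ℝ) : ℝ := x - 3 * M + 2 * M * log ((x - 2 * M) / M)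

section Tortoise

variable {M x : ℝ}

lemma hasDerivAt_tortoise (hM : 0 < M) (hx : 2 * M < x) :
    HasDerivAt (tortoise M) (x / (x - 2 * M)) x := by
  have hx' : x - 2 * M ≠ 0 := by linarith
  have hlog := (((hasDerivAt_id' x).sub_const (2 * M)).div_const M).log
    (div_pos (by linarith) hM).ne'
  refine (((hasDerivAt_id' x).sub_const (3 * M)).add (hlog.const_mul (2 * M))).congr_deriv ?_
  field_simp
  ring

lemma tortoise_le (hM : 0 < M) (hx : 2 * M < x) : tortoise M x ≤ 3 * (x - 3 * M) := by
  have hlog := log_le_sub_one_of_pos (div_pos (by linarith : 0 < x - 2 * M) hM)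
  have hscaled : 2 * M * ((x - 2 * M) / M - 1) = 2 * (x - 3 * M) := by
    field_simp
    ring
  have := mul_le_mul_of_nonneg_left hlog (by positivity : 0 ≤ 2 * M)
  unfold tortoise
  linarith

lemma sq_sub_tortoise_mul :
    x ^ 2 - tortoise M x * (x - 3 * M)
      = M * (6 * x - 9 * M - 2 * log ((x - 2 * M) / M) * (x - 3 * M)) := by
  unfold tortoise
  ring

lemma sq_le_tortoise_mul_of_le_tortoise (hM : 0 < M) (hx : 2 * M < x)
    (h : 240 * M ≤ tortoise M x) : x ^ 2 ≤ tortoise M x * (x - 3 * M) := by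
  have hfar : 80 * M ≤ x - 3 * M := by linarith [tortoise_le hM hx]
  have hlog : 4 ≤ log ((x - 2 * M) / M) := by
    rw [le_log_iff_exp_le (div_pos (by linarith) hM)]
    calc exp 4 = exp 1 ^ 4 := by rw [← exp_nat_mul]; norm_num
      _ ≤ 3 ^ 4 := by gcongr; exact exp_one_lt_three.le
      _ ≤ (x - 2 * M) / M := by rw [le_div_iff₀ hM]; linarith
  rw [← sub_nonpos, sq_sub_tortoise_mul]
  refine mul_nonpos_of_nonneg_of_nonpos hM.le ?_
  linarith [mul_le_mul_of_nonneg_right hlog (by linarith : 0 ≤ x - 3 * M)]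

lemma sq_le_tortoise_mul_of_tortoise_le (hM : 0 < M) (hx : 2 * M < x)
    (h : tortoise M x ≤ -(240 * M)) : x ^ 2 ≤ tortoise M x * (x - 3 * M) := by
  have hy : 0 < (x - 2 * M) / M := div_pos (by linarith) hM
  have hlog : log ((x - 2 * M) / M) ≤ -9 := by
    refine le_of_mul_le_mul_left ?_ (by positivity : 0 < 2 * M)
    unfold tortoise at h
    linarith
  have hnear : x - 2 * M ≤ M / 10 := by
    have hinv := log_le_sub_one_of_pos (inv_pos.mpr hy)
    rw [log_inv] at hinv
    have : 10 ≤ ((x - 2 * M) / M)⁻¹ := by linarith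
    rw [inv_div, le_div_iff₀ (by linarith)] at this
    linarith
  rw [← sub_nonpos, sq_sub_tortoise_mul]
  refine mul_nonpos_of_nonneg_of_nonpos hM.le ?_
  linarith [mul_le_mul_of_nonneg_right hlog (by linarith : 0 ≤ 3 * M - x)]

lemma sq_le_tortoise_mul (hM : 0 < M) (hx : 2 * M < x) (h : 240 * M ≤ |tortoise M x|) :
    x ^ 2 ≤ tortoise M x * (x - 3 * M) := by
  rcases le_abs'.mp h with hneg | hpos
  · exact sq_le_tortoise_mul_of_tortoise_le hM hx hneg
  · exact sq_le_tortoise_mul_of_le_tortoise hM hx hpos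

lemma tortoise_eq_of_hasDerivAt {r : ℝ → ℝ} (hM : 0 < M) (hr : ∀ s, 2 * M < r s)
    (hode : ∀ s, HasDerivAt r (1 - 2 * M / r s) s) (hr0 : r 0 = 3 * M) (s : ℝ) :
    tortoise M (r s) = s := by
  have hderiv : ∀ t, HasDerivAt (fun s => tortoise M (r s) - s) 0 t := by
    intro t
    have hsub : r t - 2 * M ≠ 0 := by linarith [hr t]
    have hne : r t ≠ 0 := by linarith [hr t]
    refine (((hasDerivAt_tortoise hM (hr t)).comp t (hode t)).sub
      (hasDerivAt_id' t)).congr_deriv ?_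
    field_simp
    ring
  have hconst := is_const_of_deriv_eq_zero (fun t => (hderiv t).differentiableAt)
    (fun t => (hderiv t).deriv) s 0
  have h0 : tortoise M (3 * M) = 0 := by
    simp [tortoise, show 3 * M - 2 * M = M by ring, hM.ne']
  simp only [hr0, h0] at hconst
  linarith

end Tortoise

section Potential

variable {M : ℝ}

lemma hasDerivAt_potential {x : ℝ} (hx : x ≠ 0) :
    HasDerivAt (fun x => (1 - 2 * M / x) / x ^ 2) (-2 / x ^ 3 * (1 - 3 * M / x)) x := by
  have h := ((hasDerivAt_const x 1).fun_sub ((hasDerivAt_const x (2 * M)).fun_div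
    (hasDerivAt_id' x) hx)).fun_div (hasDerivAt_pow 2 x) (pow_ne_zero 2 hx)
  refine h.congr_deriv ?_
  field_simp
  ring

lemma trapping_term_eq {r : ℝ → ℝ} {s : ℝ} (hode : HasDerivAt r (1 - 2 * M / r s) s)
    (hs : r s ≠ 0) :
    2 * ((1 - 2 * M / r s) / (r s) ^ 2) + s * deriv (fun x => (1 - 2 * M / r x) / (r x) ^ 2) s
      = 2 * (1 - 2 * M / r s) / (r s) ^ 4 * ((r s) ^ 2 - s * (r s - 3 * M)) := by
  have h : HasDerivAt (fun x => (1 - 2 * M / r x) / (r x) ^ 2) _ s :=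
    (hasDerivAt_potential hs).comp s hode
  rw [h.deriv]
  field_simp
  ring

end Potential

lemma exists_nonneg_hasCompactSupport_ge_of_nonpos_outside {E : Type*}
    [NormedAddCommGroup E] [ProperSpace E] {f : E → ℝ} {R : ℝ}
    (hf : ∀ x, R ≤ ‖x‖ → f x ≤ 0) :
    ∃ χ : E → ℝ, (∀ x, 0 ≤ χ x) ∧ HasCompactSupport χ ∧
      ∀ (t : ℝ) (x : E), 0 ≤ t → t * f x ≤ t * χ x := by
  refine ⟨fun x => max (f x) 0, fun x => le_max_right _ _, ?_,
    fun t x ht => mul_le_mul_of_nonneg_left (le_max_left _ _) ht⟩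
  refine HasCompactSupport.intro (isCompact_closedBall 0 R) fun x hx => ?_
  rw [Metric.mem_closedBall, dist_zero_right, not_le] at hx
  exact max_eq_right (hf x hx.le)

/-- The potential `V_L = r^{-2}(1 − 2M/r)` as a function of the tortoise coordinate
`r*` (where `r = r(r*)` solves `dr/dr* = 1 − 2M/r`, `r(0) = 3M`) satisfies
`2V_L + r*·V_L' ≤ 0` outside a compact set of `r*` values; equivalently,
`t·(2V_L + r* V_L')` is bounded above by `t` times a nonnegative compactly
supported function. -/
theorem potential_trapping_term_nonpositive_outside_compact
    (M : ℝ) (hM : 0 < M) (r : ℝ → ℝ)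
    (hr : ∀ s, 2 * M < r s)
    (hode : ∀ s, HasDerivAt r (1 - 2 * M / r s) s)
    (hr0 : r 0 = 3 * M) :
    (∃ R > 0, ∀ s : ℝ, R ≤ |s| →
      2 * ((1 - 2 * M / r s) / (r s) ^ 2)
        + s * deriv (fun x => (1 - 2 * M / r x) / (r x) ^ 2) s ≤ 0) ∧
    (∃ χ : ℝ → ℝ, (∀ s, 0 ≤ χ s) ∧ HasCompactSupport χ ∧
      ∀ t s : ℝ, 0 ≤ t →
        t * (2 * ((1 - 2 * M / r s) / (r s) ^ 2)
          + s * deriv (fun x => (1 - 2 * M / r x) / (r x) ^ 2) s) ≤ t * χ s) := by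
  have htrap : ∀ s : ℝ, 240 * M ≤ |s| →
      2 * ((1 - 2 * M / r s) / (r s) ^ 2)
        + s * deriv (fun x => (1 - 2 * M / r x) / (r x) ^ 2) s ≤ 0 := by
    intro s hs
    have hrs : 0 < r s := by linarith [hr s]
    have hlapse : 0 < 1 - 2 * M / r s := sub_pos.mpr ((div_lt_one hrs).mpr (hr s))
    have hbracket := sq_le_tortoise_mul hM (hr s)
      (by rwa [tortoise_eq_of_hasDerivAt hM hr hode hr0])
    rw [tortoise_eq_of_hasDerivAt hM hr hode hr0] at hbracket
    rw [trapping_term_eq (hode s) hrs.ne']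
    exact mul_nonpos_of_nonneg_of_nonpos (by positivity) (by linarith)
  exact ⟨⟨240 * M, by positivity, htrap⟩,
    exists_nonneg_hasCompactSupport_ge_of_nonpos_outside fun s hs => htrap s (by simpa using hs)⟩
end
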